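/- arXiv:2211.05068 — 2 statements merged into one kernel-verified Lean document; each statement's English description precedes it below -/
import Mathlib

section
/- Let α be a self-dual basis of F_{q^m} over F_q, let 0 ≤ k ≤ m, and let e be an integer with k+1 ≤ e ≤ m−1. Then the F_{q^m}-dimension of the e-Galois hull of the Gabidulin code G_k(α) equals min(m−e, k). -/
/-!
Write `v i = α^{q^i}`. For a self-dual basis the matrix `(α_j^{q^i})` times its transpose is the
matrix of the values `Tr(α_j α_l) = δ_{jl}`, so `v 0, …, v (m-1)` are orthonormal for the plain dot
product, and `v` is `m`-periodic. Since `(v j)^{q^e} = v (j + e)`, the `e`-Galois dual of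
`G_k = ⟨v 0, …, v (k-1)⟩` is the orthogonal complement of the `v ((j + e) % m)`, `j < k`, so the hull
is spanned by those `v i`, `i < k`, with `i` not of that form, i.e. `k + e - m ≤ i < k`.
-/

/-- The Gabidulin code `G_k(α)`: the `F`-span of the vectors `α^{q^i}`, `i = 0, …, k-1`. -/
noncomputable def gab {F : Type*} [Field F] (q : ℕ) {m : ℕ} (k : ℕ) (α : Fin m → F) :
    Submodule F (Fin m → F) :=
  Submodule.span F (Set.range fun i : Fin k => fun j : Fin m => α j ^ q ^ (i : ℕ))

/-- The `e`-Galois dual of a linear code `C ⊆ F^n`,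
    with respect to the inner product `x ·_e y = ∑ i, x i * (y i)^(q^e)`. -/
def galoisDual {F : Type*} [Field F] (q e : ℕ) {n : ℕ} (C : Submodule F (Fin n → F)) :
    Submodule F (Fin n → F) where
  carrier := {x | ∀ c ∈ C, ∑ i, x i * c i ^ q ^ e = 0}
  add_mem' := by
    intro a b ha hb c hc
    simp only [Set.mem_setOf_eq] at *
    simp [Pi.add_apply, add_mul, Finset.sum_add_distrib, ha c hc, hb c hc]
  zero_mem' := by
    intro c hc
    simp
  smul_mem' := by
    intro r a ha c hc
    simp only [Set.mem_setOf_eq] at *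
    simp [Pi.smul_apply, smul_eq_mul, mul_assoc, ← Finset.mul_sum, ha c hc]

open Matrix FiniteField

theorem LinearIndepOn.finrank_span_image_eq_ncard {ι R M : Type*} [Ring R] [StrongRankCondition R]
    [AddCommGroup M] [Module R M] {v : ι → M} {s : Set ι} (hs : LinearIndepOn R v s) :
    Module.finrank R (Submodule.span R (v '' s)) = s.ncard := by
  rw [Module.finrank, ← Cardinal.toNat_toENat, toENat_rank_span_set hs, Set.ncard_def]

def DotOrthonormalOn {ι n F : Type*} [DecidableEq ι] [Fintype n] [Field F] (v : ι → n → F)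
    (s : Set ι) : Prop :=
  ∀ a ∈ s, ∀ b ∈ s, v a ⬝ᵥ v b = if a = b then 1 else 0

namespace DotOrthonormalOn

variable {ι n F : Type*} [DecidableEq ι] [Fintype n] [Field F] {v : ι → n → F} {s : Set ι}

theorem dotProduct_linearCombination (hv : DotOrthonormalOn v s) {l : ι →₀ F}
    (hl : l ∈ Finsupp.supported F F s) {b : ι} (hb : b ∈ s) :
    Finsupp.linearCombination F v l ⬝ᵥ v b = l b := by
  rw [Finsupp.linearCombination_apply, Finsupp.sum, sum_dotProduct]
  simp_rw [smul_dotProduct, smul_eq_mul]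
  rw [Finset.sum_eq_single b]
  · rw [hv b hb b hb, if_pos rfl, mul_one]
  · intro a ha hab
    rw [hv a (hl ha) b hb, if_neg hab, mul_zero]
  · intro hb'
    rw [Finsupp.notMem_support_iff.mp hb', zero_mul]

theorem linearIndepOn (hv : DotOrthonormalOn v s) : LinearIndepOn F v s := by
  rw [linearIndepOn_iff]
  intro l hl hl0
  ext b
  by_cases hb : b ∈ s
  · rw [← hv.dotProduct_linearCombination hl hb, hl0, zero_dotProduct, Finsupp.zero_apply]
  · exact Finsupp.notMem_support_iff.mp fun h => hb (hl h)

theorem mem_span_image_diff_iff (hv : DotOrthonormalOn v s) {S T : Set ι} (hS : S ⊆ s)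
    (hT : T ⊆ s) {x : n → F} :
    x ∈ Submodule.span F (v '' (S \ T)) ↔
      x ∈ Submodule.span F (v '' S) ∧ ∀ b ∈ T, x ⬝ᵥ v b = 0 := by
  simp_rw [Finsupp.mem_span_image_iff_linearCombination]
  constructor
  · rintro ⟨l, hl, rfl⟩
    refine ⟨⟨l, Finsupp.supported_mono Set.sdiff_subset hl, rfl⟩, fun b hb => ?_⟩
    rw [hv.dotProduct_linearCombination (Finsupp.supported_mono (Set.sdiff_subset.trans hS) hl)
      (hT hb)]
    exact Finsupp.notMem_support_iff.mp fun h => (hl h).2 hb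
  · rintro ⟨⟨l, hl, rfl⟩, horth⟩
    refine ⟨l, fun a ha => ⟨hl ha, fun haT => Finsupp.mem_support_iff.mp ha ?_⟩, rfl⟩
    rw [← hv.dotProduct_linearCombination (Finsupp.supported_mono hS hl) (hT haT), horth a haT]

end DotOrthonormalOn

def frobeniusVec {F : Type*} [Monoid F] {m : ℕ} (q : ℕ) (α : Fin m → F) (i : ℕ) : Fin m → F :=
  fun j => α j ^ q ^ i

section frobeniusVec

variable {F : Type*} [Field F] {m : ℕ} {q : ℕ} (α : Fin m → F)

theorem gab_eq_span_image_frobeniusVec (k : ℕ) :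
    gab q k α = Submodule.span F (frobeniusVec q α '' Set.Iio k) := by
  rw [gab, ← Fin.range_val, ← Set.range_comp]
  rfl

theorem frobeniusVec_apply_pow (i e : ℕ) (j : Fin m) :
    frobeniusVec q α i j ^ q ^ e = frobeniusVec q α (i + e) j := by
  simp only [frobeniusVec, ← pow_mul, ← pow_add]

theorem frobeniusVec_periodic [Fintype F] (hF : Fintype.card F = q ^ m) :
    Function.Periodic (frobeniusVec q α) m := by
  intro i
  funext j
  rw [frobeniusVec, frobeniusVec, pow_add, pow_mul, ← hF, FiniteField.pow_card]

variable (K : Type*) [Field K] [Fintype K] [Algebra K F]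

theorem mem_galoisDual_span_iff (hK : Fintype.card K = q) (e : ℕ) {n : ℕ}
    {G : Set (Fin n → F)} {x : Fin n → F} :
    x ∈ galoisDual q e (Submodule.span F G) ↔ ∀ g ∈ G, ∑ i, x i * g i ^ q ^ e = 0 := by
  have hφ : ∀ y : F, (frobeniusAlgHom K F ^ e) y = y ^ q ^ e := fun y => by
    rw [AlgHom.coe_pow, coe_frobeniusAlgHom, pow_iterate, hK]
  refine ⟨fun hx g hg => hx g (Submodule.subset_span hg), fun hx c hc => ?_⟩
  induction hc using Submodule.span_induction with
  | mem g hg => exact hx g hg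
  | zero => simp [← hφ]
  | add c d _ _ hc hd =>
    simp only [Pi.add_apply, ← hφ, map_add, mul_add, Finset.sum_add_distrib] at hc hd ⊢
    rw [hc, hd, add_zero]
  | smul r c _ hc =>
    simp only [Pi.smul_apply, smul_eq_mul, mul_pow, mul_left_comm (x _), ← Finset.mul_sum, hc,
      mul_zero]

theorem mem_galoisDual_gab_iff [Fintype F] (hK : Fintype.card K = q) (hF : Fintype.card F = q ^ m)
    (k e : ℕ) {x : Fin m → F} :
    x ∈ galoisDual q e (gab q k α) ↔
      ∀ b ∈ (fun j => (j + e) % m) '' Set.Iio k, x ⬝ᵥ frobeniusVec q α b = 0 := by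
  rw [gab_eq_span_image_frobeniusVec, mem_galoisDual_span_iff K hK, Set.forall_mem_image,
    Set.forall_mem_image]
  simp only [frobeniusVec_apply_pow, (frobeniusVec_periodic α hF).map_mod_nat, dotProduct]

theorem dotOrthonormalOn_frobeniusVec [Finite F] (hK : Fintype.card K = q)
    (hrank : Module.finrank K F = m)
    (hsd : ∀ i j, Algebra.trace K F (α i * α j) = if i = j then 1 else 0) :
    DotOrthonormalOn (frobeniusVec q α) (Set.Iio m) := by
  intro a ha b hb
  let M : Matrix (Fin m) (Fin m) F := Matrix.of fun j i => α j ^ q ^ (i : ℕ)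
  have hMMt : M * Mᵀ = 1 := by
    ext j l
    have htrace := algebraMap_trace_eq_sum_pow K F (α j * α l)
    rw [hrank, Nat.card_eq_fintype_card, hK, Finset.sum_range, hsd] at htrace
    simp only [mul_apply, one_apply, M, of_apply, transpose_apply, ← mul_pow, ← htrace]
    split_ifs <;> simp
  have hMtM : Mᵀ * M = 1 := mul_eq_one_comm.mp hMMt
  have hab := congrArg (fun N : Matrix (Fin m) (Fin m) F => N ⟨a, ha⟩ ⟨b, hb⟩) hMtM
  simpa [mul_apply, one_apply, M, Fin.ext_iff, dotProduct, frobeniusVec] using hab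

end frobeniusVec

theorem Iio_diff_image_add_mod {k e m : ℕ} (hke : k < e) (hem : e < m) :
    Set.Iio k \ (fun j => (j + e) % m) '' Set.Iio k = Set.Ico (k + e - m) k := by
  ext i
  simp only [Set.mem_sdiff, Set.mem_Iio, Set.mem_image, Set.mem_Ico, not_exists, not_and]
  constructor
  · rintro ⟨hik, hnot⟩
    refine ⟨not_lt.mp fun hlt => hnot (i + m - e) (by omega) ?_, hik⟩
    rw [show i + m - e + e = i + m by omega, Nat.add_mod_right, Nat.mod_eq_of_lt (by omega)]
  · rintro ⟨hlo, hik⟩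
    refine ⟨hik, fun j hjk hji => ?_⟩
    rcases lt_or_ge (j + e) m with hlt | hge
    · rw [Nat.mod_eq_of_lt hlt] at hji
      omega
    · rw [Nat.mod_eq_sub_mod hge, Nat.mod_eq_of_lt (by omega)] at hji
      omega

theorem hull_dim_gab_of_gt_general
    (q m : ℕ)
    (K F : Type) [Field K] [Field F] [Algebra K F] [Fintype K] [Fintype F]
    (hK : Fintype.card K = q)
    (α : Fin m → F) (hα : ∃ b : Module.Basis (Fin m) K F, ⇑b = α)
    (hsd : ∀ i j, Algebra.trace K F (α i * α j) = if i = j then 1 else 0)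
    (k e : ℕ) (he : k + 1 ≤ e) (hem : e ≤ m - 1) :
    Module.finrank F ↥(gab q k α ⊓ galoisDual q e (gab q k α)) = min (m - e) k := by
  obtain ⟨b, rfl⟩ := hα
  have hrank : Module.finrank K F = m := by rw [Module.finrank_eq_card_basis b, Fintype.card_fin]
  have hF : Fintype.card F = q ^ m := by rw [Module.card_eq_pow_finrank (K := K), hK, hrank]
  have hv := dotOrthonormalOn_frobeniusVec b K hK hrank hsd
  have hke : k < e := by omega
  have hem' : e < m := by omega
  have hshift : (fun j => (j + e) % m) '' Set.Iio k ⊆ Set.Iio m := by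
    rintro _ ⟨j, -, rfl⟩
    exact Nat.mod_lt _ (by omega)
  have hhull : gab q k b ⊓ galoisDual q e (gab q k b) =
      Submodule.span F (frobeniusVec q b '' Set.Ico (k + e - m) k) := by
    ext x
    rw [Submodule.mem_inf, mem_galoisDual_gab_iff b K hK hF, gab_eq_span_image_frobeniusVec,
      ← Iio_diff_image_add_mod hke hem', hv.mem_span_image_diff_iff (Set.Iio_subset_Iio (by omega))
      hshift]
  rw [hhull, (hv.linearIndepOn.mono (Set.Ico_subset_Iio_self.trans
    (Set.Iio_subset_Iio (by omega)))).finrank_span_image_eq_ncard, Set.ncard_Ico_nat]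
  omega

/-- For a self-dual basis `α` and `k + 1 ≤ e ≤ m - 1`, the `e`-Galois hull of `G_k(α)`
has dimension `min (m - e) k`. -/
theorem hull_dim_gab_of_gt
    (q m : ℕ) (hq : IsPrimePow q) (hm : 0 < m)
    (K F : Type) [Field K] [Field F] [Algebra K F] [Fintype K] [Fintype F]
    (hK : Fintype.card K = q) (hF : Fintype.card F = q ^ m)
    (α : Fin m → F) (hα : ∃ b : Module.Basis (Fin m) K F, ⇑b = α)
    (hsd : ∀ i j, Algebra.trace K F (α i * α j) = if i = j then 1 else 0)
    (k e : ℕ) (hk : k ≤ m) (he : k + 1 ≤ e) (hem : e ≤ m - 1) :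
    Module.finrank F ↥(gab q k α ⊓ galoisDual q e (gab q k α)) = min (m - e) k :=
  hull_dim_gab_of_gt_general q m K F hK α hα hsd k e he hem
end

section
/- Let α be a basis of F_{q^m} over F_q with dual basis β, and let 1 ≤ k ≤ m−1. Then the Euclidean dual (i.e., the 0-Galois dual) of the Gabidulin code G_k(α) is the F_{q^m}-linear span of the m−k vectors β^{q^i} := (β_1^{q^i}, ..., β_m^{q^i}) for i = k, k+1, ..., m−1. -/
/-!
Let `M_α = (α_j ^ q^i)` and `M_β = (β_j ^ q^i)` be the Moore matrices of the two bases. Since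
the trace of `F/K` is the sum of the Frobenius conjugates `x ^ q^i`, the entries of `M_βᵀ M_α`
are the traces `Tr(α_j β_i)`, so `M_βᵀ M_α = 1` and hence `M_α M_βᵀ = 1`. The rows of `M_α` and
`M_β` are thus biorthogonal for the dot product, and the vectors orthogonal to the first `k`
rows of `M_α` are exactly the combinations of the last `m - k` rows of `M_β`.
-/

open Matrix Module Submodule

def mooreMatrix {R ι : Type*} [Monoid R] (q m : ℕ) (α : ι → R) : Matrix (Fin m) ι R :=
  fun i j => α j ^ q ^ (i : ℕ)

section Dual

variable {F : Type*} [Field F] {m : ℕ}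

theorem mem_galoisDual_zero_span_iff (q : ℕ) (s : Set (Fin m → F)) (x : Fin m → F) :
    x ∈ galoisDual q 0 (span F s) ↔ ∀ c ∈ s, x ⬝ᵥ c = 0 := by
  simp only [galoisDual, pow_zero, pow_one, ← dotProduct.eq_1, Submodule.mem_mk,
    AddSubmonoid.mem_mk, AddSubsemigroup.mem_mk, Set.mem_ofPred_eq]
  refine ⟨fun h c hc => h c (subset_span hc), fun h c hc => ?_⟩
  induction hc using span_induction with
  | mem c hc => exact h c hc
  | zero => exact dotProduct_zero x
  | add c d _ _ hc hd => rw [dotProduct_add, hc, hd, add_zero]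
  | smul a c _ hc => rw [dotProduct_smul, hc, smul_zero]

theorem galoisDual_zero_span_image_eq_span_image_compl (q : ℕ) {A B : Matrix (Fin m) (Fin m) F}
    (hAB : A * Bᵀ = 1) (S : Set (Fin m)) :
    galoisDual q 0 (span F (A '' S)) = span F (B '' Sᶜ) := by
  refine le_antisymm (fun x hx => ?_) (span_le.mpr ?_)
  · rw [mem_galoisDual_zero_span_iff] at hx
    have hexpand : x = ∑ s, (A s ⬝ᵥ x) • B s := by
      rw [← vecMul_eq_sum, ← mulVec_transpose]
      change x = Bᵀ *ᵥ (A *ᵥ x)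
      rw [mulVec_mulVec, mul_eq_one_comm.mp hAB, one_mulVec]
    rw [hexpand]
    refine sum_mem fun s _ => ?_
    by_cases hs : s ∈ S
    · rw [dotProduct_comm, hx _ ⟨s, hs, rfl⟩, zero_smul]
      exact zero_mem _
    · exact smul_mem _ _ (subset_span ⟨s, hs, rfl⟩)
  · rintro _ ⟨s, hs, rfl⟩
    rw [SetLike.mem_coe, mem_galoisDual_zero_span_iff]
    rintro _ ⟨i, hi, rfl⟩
    rw [dotProduct_comm, ← one_apply_ne (ne_of_mem_of_not_mem hi hs), ← hAB, mul_apply]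
    rfl

end Dual

section Moore

variable {F : Type*} [Field F] {m : ℕ} (q : ℕ) (α β : Fin m → F)

theorem range_frobeniusPow_eq_image_mooreMatrix_lt {k : ℕ} (hk : k ≤ m) :
    (Set.range fun i : Fin k => fun j => α j ^ q ^ (i : ℕ)) =
      mooreMatrix q m α '' {i | (i : ℕ) < k} := by
  ext v
  constructor
  · rintro ⟨i, rfl⟩
    exact ⟨Fin.castLE hk i, i.2, rfl⟩
  · rintro ⟨i, hi, rfl⟩
    exact ⟨⟨i, hi⟩, rfl⟩

theorem range_frobeniusPow_add_eq_image_mooreMatrix_not_lt {k : ℕ} (hk : k ≤ m) :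
    (Set.range fun i : Fin (m - k) => fun j => α j ^ q ^ (k + (i : ℕ))) =
      mooreMatrix q m α '' {i | (i : ℕ) < k}ᶜ := by
  ext v
  constructor
  · rintro ⟨i, rfl⟩
    exact ⟨⟨k + i, by omega⟩, by simp, rfl⟩
  · rintro ⟨i, hi, rfl⟩
    simp only [Set.mem_compl_iff, Set.mem_ofPred_eq, not_lt] at hi
    refine ⟨⟨i - k, by omega⟩, ?_⟩
    simp only [Nat.add_sub_cancel' hi]
    rfl

variable {K : Type*} [Field K] [Algebra K F] [Finite F]

theorem mooreMatrix_transpose_mul_mooreMatrix_apply (hK : Nat.card K = q)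
    (hm : finrank K F = m) (l l' : Fin m) :
    ((mooreMatrix q m β)ᵀ * mooreMatrix q m α) l l' =
      algebraMap K F (Algebra.trace K F (α l' * β l)) := by
  subst hm hK
  rw [FiniteField.algebraMap_trace_eq_sum_pow, mul_apply, ← Fin.sum_univ_eq_sum_range]
  simp only [mooreMatrix, transpose_apply, mul_pow, mul_comm]

theorem mooreMatrix_mul_transpose_eq_one (hK : Nat.card K = q) (hm : finrank K F = m)
    (hdual : ∀ i j, Algebra.trace K F (α i * β j) = if i = j then 1 else 0) :
    mooreMatrix q m α * (mooreMatrix q m β)ᵀ = 1 := by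
  refine mul_eq_one_comm.mp (ext fun l l' => ?_)
  rw [mooreMatrix_transpose_mul_mooreMatrix_apply q α β hK hm, hdual, one_apply]
  simp [apply_ite, eq_comm]

end Moore

theorem finrank_eq_of_card_eq_pow {K F : Type*} [Field K] [Field F] [Algebra K F] [Fintype K]
    [Fintype F] {m : ℕ} (hF : Fintype.card F = Fintype.card K ^ m) : finrank K F = m :=
  Nat.pow_right_injective Fintype.one_lt_card (card_eq_pow_finrank.symm.trans hF)

theorem euclidean_dual_gab_general
    (q m : ℕ)
    (K F : Type) [Field K] [Field F] [Algebra K F] [Fintype K] [Fintype F]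
    (hK : Fintype.card K = q) (hF : Fintype.card F = q ^ m)
    (α β : Fin m → F)
    (hdual : ∀ i j, Algebra.trace K F (α i * β j) = if i = j then 1 else 0)
    (k : ℕ) (hk2 : k ≤ m - 1) :
    galoisDual q 0 (gab q k α) =
      Submodule.span F (Set.range fun i : Fin (m - k) => fun j : Fin m =>
        β j ^ q ^ (k + (i : ℕ))) := by
  have hk : k ≤ m := by omega
  have hαβ := mooreMatrix_mul_transpose_eq_one q α β (Nat.card_eq_fintype_card.trans hK)
    (finrank_eq_of_card_eq_pow (hK ▸ hF)) hdual
  rw [gab, range_frobeniusPow_eq_image_mooreMatrix_lt q α hk,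
    range_frobeniusPow_add_eq_image_mooreMatrix_not_lt q β hk,
    galoisDual_zero_span_image_eq_span_image_compl q hαβ]

/-- The Euclidean (0-Galois) dual of the Gabidulin code `G_k(α)` is the span of the
vectors `β^{q^i}` for `i = k, …, m-1`, where `β` is the dual basis of `α`. -/
theorem euclidean_dual_gab
    (q m : ℕ) (hq : IsPrimePow q) (hm : 0 < m)
    (K F : Type) [Field K] [Field F] [Algebra K F] [Fintype K] [Fintype F]
    (hK : Fintype.card K = q) (hF : Fintype.card F = q ^ m)
    (α β : Fin m → F)
    (hα : ∃ b : Module.Basis (Fin m) K F, ⇑b = α)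
    (hβ : ∃ b : Module.Basis (Fin m) K F, ⇑b = β)
    (hdual : ∀ i j, Algebra.trace K F (α i * β j) = if i = j then 1 else 0)
    (k : ℕ) (hk1 : 1 ≤ k) (hk2 : k ≤ m - 1) :
    galoisDual q 0 (gab q k α) =
      Submodule.span F (Set.range fun i : Fin (m - k) => fun j : Fin m =>
        β j ^ q ^ (k + (i : ℕ))) :=
  euclidean_dual_gab_general q m K F hK hF α β hdual k hk2
end
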